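/- In the free right R-module R², there are exactly nine free cyclic right submodules (x,y)R containing no unimodular vector, and every vector lying in any of these nine submodules has both of its coordinates in the ideal I_r. -/

import Mathlib

open Matrix

/-- The matrix m(a,b,c,d) = [[a,c,d],[0,b,0],[0,0,b]] over GF(2). -/
def m (a b c d : ZMod 2) : Matrix (Fin 3) (Fin 3) (ZMod 2) :=
  !![a, c, d; 0, b, 0; 0, 0, b]

lemma m_mul (a b c d a' b' c' d' : ZMod 2) :
    m a b c d * m a' b' c' d' =
      m (a * a') (b * b') (a * c' + c * b') (a * d' + d * b') := by
  ext i j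
  fin_cases i <;> fin_cases j <;>
    simp [m, Matrix.mul_apply, Fin.sum_univ_three, Matrix.vecHead, Matrix.vecTail]

/-- The ring R, as a subring of the 3×3 matrices over GF(2). -/
def Rring : Subring (Matrix (Fin 3) (Fin 3) (ZMod 2)) where
  carrier := {A | ∃ a b c d : ZMod 2, A = m a b c d}
  zero_mem' := ⟨0, 0, 0, 0, by ext i j; fin_cases i <;> fin_cases j <;> simp [m, Matrix.vecHead, Matrix.vecTail]⟩
  one_mem' := ⟨1, 1, 0, 0, by ext i j; fin_cases i <;> fin_cases j <;> simp [m, Matrix.one_apply, Matrix.vecHead, Matrix.vecTail]⟩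
  add_mem' := by
    rintro A B ⟨a, b, c, d, rfl⟩ ⟨a', b', c', d', rfl⟩
    exact ⟨a + a', b + b', c + c', d + d',
      by ext i j; fin_cases i <;> fin_cases j <;> simp [m, Matrix.vecHead, Matrix.vecTail]⟩
  neg_mem' := by
    rintro A ⟨a, b, c, d, rfl⟩
    exact ⟨-a, -b, -c, -d,
      by ext i j; fin_cases i <;> fin_cases j <;> simp [m, Matrix.vecHead, Matrix.vecTail]⟩
  mul_mem' := by
    rintro A B ⟨a, b, c, d, rfl⟩ ⟨a', b', c', d', rfl⟩
    exact ⟨a * a', b * b', a * c' + c * b', a * d' + d * b', m_mul a b c d a' b' c' d'⟩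

lemma m_mem (a b c d : ZMod 2) : m a b c d ∈ Rring := ⟨a, b, c, d, rfl⟩

/-- The element m(a,b,c,d) viewed as an element of the ring R. -/
def mm (a b c d : ZMod 2) : Rring := ⟨m a b c d, m_mem a b c d⟩

/-- The cyclic left submodule R(x,y) = {(αx, αy) : α ∈ R} of R², as a set of vectors. -/
def RM (x y : Rring) : Set (Rring × Rring) := {p | ∃ α : Rring, p = (α * x, α * y)}

def t : Rring := mm 0 0 1 0
def f : Rring := mm 0 0 1 1
def s : Rring := mm 0 0 0 1
def e : Rring := mm 0 1 0 0
def u : Rring := mm 0 1 1 0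
def v : Rring := mm 0 1 1 1
def w : Rring := mm 0 1 0 1

/-- The nine distinguished generators. -/
def gens : List (Rring × Rring) :=
  [(t, e), (f, e), (s, e), (e, u), (e, v), (e, w), (e, s), (e, f), (e, t)]

/-- The set I_r = {m(a,0,c,d) : a,c,d ∈ GF(2)}, as a subset of R. -/
def Ir : Set Rring := {x | ∃ a c d : ZMod 2, x = mm a 0 c d}

/-- The cyclic right submodule (x,y)R = {(xα, yα) : α ∈ R} of R², as a set of vectors. -/
def RMr (x y : Rring) : Set (Rring × Rring) := {p | ∃ α : Rring, p = (x * α, y * α)}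

/-!
The diagonal `m(a,b,c,d) ↦ (a,b)` is the reduction of `R` modulo its radical `{m(0,0,c,d)}`,
so a pair is unimodular exactly when its image in `GF(2)²` is. Since `R` is Dedekind-finite,
`(x,y)R` contains a unimodular vector only if `(x,y)` itself is one. If `(x,y)R` is free,
right multiplication by the idempotent `m(1,0,0,0)` shows that `a_x, a_y` are not both zero;
so `(x,y)R` avoids unimodular vectors iff `b_x = b_y = 0`, which puts `(x,y)R` inside `I_r²`.
Two free generators of the same cyclic module differ by a unit, so the 36 such generators
fall into classes of size `|Rˣ| = 4`, giving 9 modules.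
-/

open Function

section RightSpan

variable {A : Type*} [Ring A]

def rightSpan (x y : A) : Set (A × A) := {p | ∃ α : A, p = (x * α, y * α)}

theorem injective_mul_pair_iff {x y : A} :
    (Injective fun α => (x * α, y * α)) ↔ ∀ α, x * α = 0 → y * α = 0 → α = 0 :=
  (injective_iff_map_eq_zero ((AddMonoidHom.mulLeft x).prod (AddMonoidHom.mulLeft y))).trans <| by
    simp [Prod.ext_iff, and_imp]

theorem exists_isUnit_of_rightSpan_eq {x y x' y' : A}
    (h : Injective fun α => (x * α, y * α)) (h' : Injective fun α => (x' * α, y' * α))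
    (hM : rightSpan x y = rightSpan x' y') : ∃ u, IsUnit u ∧ x' = x * u ∧ y' = y * u := by
  obtain ⟨α, hα⟩ : (x', y') ∈ rightSpan x y := hM ▸ ⟨1, by simp⟩
  obtain ⟨β, hβ⟩ : (x, y) ∈ rightSpan x' y' := hM ▸ ⟨1, by simp⟩
  simp only [Prod.mk.injEq] at hα hβ
  have hαβ : α * β = 1 :=
    h <| by simp only [← mul_assoc, ← hα.1, ← hα.2, ← hβ.1, ← hβ.2, mul_one]
  have hβα : β * α = 1 :=
    h' <| by simp only [← mul_assoc, ← hα.1, ← hα.2, ← hβ.1, ← hβ.2, mul_one]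
  exact ⟨α, ⟨⟨α, β, hαβ, hβα⟩, rfl⟩, hα.1, hα.2⟩

theorem rightSpan_mul_of_isUnit (x y : A) {u : A} (hu : IsUnit u) :
    rightSpan (x * u) (y * u) = rightSpan x y := by
  obtain ⟨u, rfl⟩ := hu
  ext p
  constructor
  · rintro ⟨α, rfl⟩
    exact ⟨u * α, by simp [mul_assoc]⟩
  · rintro ⟨α, rfl⟩
    exact ⟨↑u⁻¹ * α, by simp [mul_assoc]⟩

theorem injective_mul_of_isUnit {x y : A} (h : Injective fun α => (x * α, y * α)) {u : A}
    (hu : IsUnit u) : Injective fun α => (x * u * α, y * u * α) := by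
  intro α β hαβ
  exact hu.mul_right_injective (h (by simpa [mul_assoc] using hαβ))

open Finset in
theorem ncard_free_eq_mul_ncard_isUnit [Finite A] (P : Set (A × A) → Prop) :
    {z : A × A | (Injective fun α => (z.1 * α, z.2 * α)) ∧ P (rightSpan z.1 z.2)}.ncard =
      {M | ∃ x y : A, M = rightSpan x y ∧ (Injective fun α => (x * α, y * α)) ∧ P M}.ncard *
        {u : A | IsUnit u}.ncard := by
  classical
  have := Fintype.ofFinite A
  set S := {z : A × A | (Injective fun α => (z.1 * α, z.2 * α)) ∧ P (rightSpan z.1 z.2)}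
  set T := {M | ∃ x y : A, M = rightSpan x y ∧ (Injective fun α => (x * α, y * α)) ∧ P M}
  have fiber_card (x y : A) (hxy : Injective fun α => (x * α, y * α)) (hP : P (rightSpan x y)) :
      #{z ∈ S.toFinset | rightSpan z.1 z.2 = rightSpan x y} = #{u : A | IsUnit u}.toFinset := by
    rw [← Finset.card_image_of_injective _ hxy]
    congr 1
    ext z
    simp only [Finset.mem_filter, Set.mem_toFinset, Set.mem_ofPred_eq, Finset.mem_image, S]
    constructor
    · rintro ⟨⟨hz, -⟩, hM⟩
      obtain ⟨u, hu, h1, h2⟩ := exists_isUnit_of_rightSpan_eq hxy hz hM.symm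
      exact ⟨u, hu, Prod.ext h1.symm h2.symm⟩
    · rintro ⟨u, hu, rfl⟩
      rw [rightSpan_mul_of_isUnit x y hu]
      exact ⟨⟨injective_mul_of_isUnit hxy hu, hP⟩, rfl⟩
  rw [Set.ncard_eq_toFinset_card' S, Set.ncard_eq_toFinset_card' T,
    Set.ncard_eq_toFinset_card' {u : A | IsUnit u}, Finset.card_eq_sum_card_fiberwise
    (t := T.toFinset) (f := fun z => rightSpan z.1 z.2), ← smul_eq_mul, ← Finset.sum_const]
  · refine Finset.sum_congr rfl fun M hM => ?_
    obtain ⟨x, y, rfl, hxy, hP⟩ := Set.mem_toFinset.mp hM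
    exact fiber_card x y hxy hP
  · intro z hz
    rw [Set.coe_toFinset] at hz ⊢
    exact ⟨z.1, z.2, rfl, hz⟩

end RightSpan

section Unimodular

variable {A B : Type*} [Ring A] [Ring B]

def IsUnimodular (x y : A) : Prop := ∃ c d : A, c * x + d * y = 1

theorem IsUnimodular.of_mul_right [IsDedekindFiniteMonoid A] {x y α : A}
    (h : IsUnimodular (x * α) (y * α)) : IsUnimodular x y := by
  obtain ⟨c, d, h⟩ := h
  refine ⟨α * c, α * d, ?_⟩
  rw [← mul_assoc, ← mul_assoc, ← add_mul] at h
  simpa only [mul_add, mul_assoc] using mul_eq_one_symm h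

theorem forall_not_isUnimodular_iff [IsDedekindFiniteMonoid A] {x y : A} :
    (∀ p ∈ rightSpan x y, ¬IsUnimodular p.1 p.2) ↔ ¬IsUnimodular x y := by
  refine ⟨fun h => h (x, y) ⟨1, by simp⟩, ?_⟩
  rintro h _ ⟨α, rfl⟩ hα
  exact h hα.of_mul_right

theorem IsUnimodular.map (f : A →+* B) {x y : A} (h : IsUnimodular x y) :
    IsUnimodular (f x) (f y) := by
  obtain ⟨c, d, h⟩ := h
  exact ⟨f c, f d, by rw [← map_mul, ← map_mul, ← map_add, h, map_one]⟩

theorem IsUnimodular.of_map (f : A →+* B) [IsLocalHom f] (hf : Surjective f) {x y : A}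
    (h : IsUnimodular (f x) (f y)) : IsUnimodular x y := by
  obtain ⟨c', d', h⟩ := h
  obtain ⟨c, rfl⟩ := hf c'
  obtain ⟨d, rfl⟩ := hf d'
  obtain ⟨u, hu⟩ : IsUnit (c * x + d * y) :=
    (isUnit_map_iff f _).mp (by rw [map_add, map_mul, map_mul, h]; exact isUnit_one)
  refine ⟨↑u⁻¹ * c, ↑u⁻¹ * d, ?_⟩
  rw [mul_assoc, mul_assoc, ← mul_add, ← hu, Units.inv_mul]

theorem IsUnimodular.of_fst_of_snd {x y : A × B} (h₁ : IsUnimodular x.1 y.1) (h₂ : IsUnimodular x.2 y.2) :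
    IsUnimodular x y := by
  obtain ⟨c₁, d₁, h₁⟩ := h₁
  obtain ⟨c₂, d₂, h₂⟩ := h₂
  exact ⟨(c₁, c₂), (d₁, d₂), Prod.ext h₁ h₂⟩

theorem isUnimodular_of_ne_zero {K : Type*} [DivisionRing K] {x y : K} (h : x ≠ 0 ∨ y ≠ 0) :
    IsUnimodular x y := by
  rcases h with hx | hy
  · exact ⟨x⁻¹, 0, by simp [hx]⟩
  · exact ⟨0, y⁻¹, by simp [hy]⟩

end Unimodular

lemma mm_mul (a b c d a' b' c' d' : ZMod 2) :
    mm a b c d * mm a' b' c' d' = mm (a * a') (b * b') (a * c' + c * b') (a * d' + d * b') :=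
  Subtype.ext (m_mul a b c d a' b' c' d')

lemma exists_eq_mm (x : Rring) : ∃ a b c d, x = mm a b c d := by
  obtain ⟨_, a, b, c, d, rfl⟩ := x
  exact ⟨a, b, c, d, rfl⟩

lemma mm_zero : mm 0 0 0 0 = 0 := by
  ext i j; fin_cases i <;> fin_cases j <;> rfl

lemma mm_one : mm 1 1 0 0 = 1 := by
  ext i j; fin_cases i <;> fin_cases j <;> rfl

def diagHom : Rring →+* ZMod 2 × ZMod 2 where
  toFun x := (x.1 0 0, x.1 1 1)
  map_one' := rfl
  map_mul' x y := by
    obtain ⟨a, b, c, d, rfl⟩ := exists_eq_mm x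
    obtain ⟨a', b', c', d', rfl⟩ := exists_eq_mm y
    rw [mm_mul]
    rfl
  map_zero' := rfl
  map_add' _ _ := rfl

@[simp]
lemma diagHom_mm (a b c d : ZMod 2) : diagHom (mm a b c d) = (a, b) := rfl

lemma diagHom_surjective : Surjective diagHom := fun p => ⟨mm p.1 p.2 0 0, rfl⟩

instance : IsLocalHom diagHom where
  map_nonunit x hx := by
    obtain ⟨a, b, c, d, rfl⟩ := exists_eq_mm x
    obtain ⟨rfl, rfl⟩ : a = 1 ∧ b = 1 := by simpa [diagHom_mm, Prod.isUnit_iff] using hx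
    have h : mm 1 1 c d * mm 1 1 c d = 1 := by
      rw [mm_mul, ← mm_one]
      congr 1 <;> revert c d <;> decide
    exact ⟨⟨_, _, h, h⟩, rfl⟩

lemma isUnit_iff_diagHom_eq_one {x : Rring} : IsUnit x ↔ diagHom x = 1 := by
  rw [← isUnit_map_iff diagHom, Prod.isUnit_iff, Prod.ext_iff, isUnit_iff_eq_one, isUnit_iff_eq_one]
  rfl

lemma mul_mm_one_zero (x : Rring) : x * mm 1 0 0 0 = mm (diagHom x).1 0 0 0 := by
  obtain ⟨a, b, c, d, rfl⟩ := exists_eq_mm x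
  simp [mm_mul]

lemma diagHom_fst_ne_zero_of_injective {x y : Rring} (h : Injective fun α => (x * α, y * α)) :
    (diagHom x).1 ≠ 0 ∨ (diagHom y).1 ≠ 0 := by
  by_contra! hxy
  suffices mm 1 0 0 0 = 0 by simpa using congrArg (fun z => (diagHom z).1) this
  refine injective_mul_pair_iff.mp h _ ?_ ?_ <;>
    simp [mul_mm_one_zero, hxy, mm_zero]

lemma not_isUnimodular_iff_of_injective {x y : Rring} (h : Injective fun α => (x * α, y * α)) :
    ¬IsUnimodular x y ↔ (diagHom x).2 = 0 ∧ (diagHom y).2 = 0 := by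
  constructor
  · intro hxy
    by_contra! hb
    refine hxy (.of_map diagHom diagHom_surjective (.of_fst_of_snd ?_ ?_))
    · exact isUnimodular_of_ne_zero (diagHom_fst_ne_zero_of_injective h)
    · exact isUnimodular_of_ne_zero (or_iff_not_imp_left.mpr fun hx => hb (not_not.mp hx))
  · rintro ⟨hx, hy⟩ hxy
    obtain ⟨c, d, h⟩ := hxy.map diagHom
    simpa [hx, hy] using congrArg Prod.snd h

lemma mem_Ir_of_diagHom_snd_eq_zero {x : Rring} (hx : (diagHom x).2 = 0) : x ∈ Ir := by
  obtain ⟨a, b, c, d, rfl⟩ := exists_eq_mm x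
  obtain rfl : b = 0 := hx
  exact ⟨a, c, d, rfl⟩

abbrev Coords := ZMod 2 × ZMod 2 × ZMod 2 × ZMod 2

def ofCoords (p : Coords) : Rring := mm p.1 p.2.1 p.2.2.1 p.2.2.2

def coordsMul (p q : Coords) : Coords :=
  (p.1 * q.1, p.2.1 * q.2.1, p.1 * q.2.2.1 + p.2.2.1 * q.2.1, p.1 * q.2.2.2 + p.2.2.2 * q.2.1)

@[simp]
lemma diagHom_ofCoords (p : Coords) :
    diagHom (ofCoords p) = (p.1, p.2.1) :=
  rfl

lemma ofCoords_mul (p q : Coords) :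
    ofCoords p * ofCoords q = ofCoords (coordsMul p q) :=
  mm_mul ..

lemma ofCoords_bijective : Bijective ofCoords := by
  refine ⟨fun p q h => ?_, fun x => ?_⟩
  · have h' := congrArg Subtype.val h
    exact Prod.ext (congrFun (congrFun h' 0) 0) <| Prod.ext (congrFun (congrFun h' 1) 1) <|
      Prod.ext (congrFun (congrFun h' 0) 1) (congrFun (congrFun h' 0) 2)
  · obtain ⟨a, b, c, d, rfl⟩ := exists_eq_mm x
    exact ⟨(a, b, c, d), rfl⟩

lemma ofCoords_eq_zero {p : Coords} : ofCoords p = 0 ↔ p = 0 :=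
  ofCoords_bijective.1.eq_iff' mm_zero

lemma ncard_isUnit : {u : Rring | IsUnit u}.ncard = 4 := by
  rw [← Set.ncard_preimage_of_injective_subset_range ofCoords_bijective.1
    (by simp [ofCoords_bijective.2.range_eq])]
  simp only [Set.preimage_ofPred_eq, isUnit_iff_diagHom_eq_one]
  rw [Set.ncard_eq_toFinset_card']
  decide

-- `(a, a') ≠ 0` (3 choices), and `(c, c')`, `(d, d')` not both multiples of `(a, a')` (12).
lemma ncard_coords_free :
    {pq : Coords × Coords |
      (∀ β, coordsMul pq.1 β = 0 → coordsMul pq.2 β = 0 → β = 0) ∧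
        pq.1.2.1 = 0 ∧ pq.2.2.1 = 0}.ncard = 36 := by
  rw [← Finset.coe_filter_univ, Set.ncard_coe_finset]
  decide

lemma injective_ofCoords_mul_iff {p q : Coords} :
    (Injective fun α => (ofCoords p * α, ofCoords q * α)) ↔
      ∀ β, coordsMul p β = 0 → coordsMul q β = 0 → β = 0 := by
  simp only [injective_mul_pair_iff, ofCoords_bijective.2.forall, ofCoords_mul, ofCoords_eq_zero]

lemma ncard_injective_diagHom_snd_eq_zero :
    {z : Rring × Rring | (Injective fun α => (z.1 * α, z.2 * α)) ∧
      (diagHom z.1).2 = 0 ∧ (diagHom z.2).2 = 0}.ncard = 36 := by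
  have hbij : Bijective (Prod.map ofCoords ofCoords) :=
    ofCoords_bijective.prodMap ofCoords_bijective
  rw [← Set.ncard_preimage_of_injective_subset_range hbij.1 (by simp [hbij.2.range_eq]),
    ← ncard_coords_free]
  simp only [Set.preimage_ofPred_eq, Prod.map_fst, Prod.map_snd, injective_ofCoords_mul_iff,
    diagHom_ofCoords]

/-- In the free right R-module R² there are exactly nine free cyclic right submodules
containing no unimodular vector, and every vector lying in any of them has both
coordinates in the ideal I_r. -/
theorem right_module_nonunimodular :
    {M : Set (Rring × Rring) | ∃ x y : Rring, M = RMr x y ∧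
      Function.Injective (fun α : Rring => (x * α, y * α)) ∧
      ∀ p ∈ M, ¬ ∃ c d : Rring, c * p.1 + d * p.2 = 1}.ncard = 9 ∧
    (∀ x y : Rring, Function.Injective (fun α : Rring => (x * α, y * α)) →
      (∀ p ∈ RMr x y, ¬ ∃ c d : Rring, c * p.1 + d * p.2 = 1) →
      RMr x y ⊆ Ir ×ˢ Ir) := by
  refine ⟨?_, fun x y hxy hnu => ?_⟩
  · have hgood : {z : Rring × Rring | (Injective fun α => (z.1 * α, z.2 * α)) ∧
        ∀ p ∈ rightSpan z.1 z.2, ¬IsUnimodular p.1 p.2}.ncard = 36 := by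
      rw [← ncard_injective_diagHom_snd_eq_zero]
      congr 1
      ext z
      simp only [Set.mem_ofPred_eq, forall_not_isUnimodular_iff]
      exact and_congr_right not_isUnimodular_iff_of_injective
    have key := ncard_free_eq_mul_ncard_isUnit fun M : Set (Rring × Rring) =>
      ∀ p ∈ M, ¬IsUnimodular p.1 p.2
    rw [hgood, ncard_isUnit] at key
    exact (by omega : ∀ n : ℕ, 36 = n * 4 → n = 9) _ key
  · obtain ⟨hx, hy⟩ := (not_isUnimodular_iff_of_injective hxy).mp (forall_not_isUnimodular_iff.mp hnu)
    rintro _ ⟨α, rfl⟩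
    exact ⟨mem_Ir_of_diagHom_snd_eq_zero (by simp [hx]),
      mem_Ir_of_diagHom_snd_eq_zero (by simp [hy])⟩
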